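/- arXiv:1704.01685 — 5 statements merged into one kernel-verified Lean document; each statement's English description precedes it below -/
import Mathlib

section
/- Let p and q be distinct odd primes and N = pq. Then gcd(2^p - 1, (2^N - 1)/(2^p - 1)) = gcd(2^p - 1, q). -/
/-! The quotient `(x ^ n - 1) / (x - 1)` is the geometric sum `∑ i < n, x ^ i`, and since
`x ≡ 1 [MOD x - 1]` this sum is `≡ n [MOD x - 1]`; apply this with `x = 2 ^ p`, `n = q`. -/

theorem Nat.geomSum_modEq {m x : ℕ} (hx : x ≡ 1 [MOD m]) (n : ℕ) :
    ∑ i ∈ Finset.range n, x ^ i ≡ n [MOD m] := by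
  simpa using Nat.ModEq.sum (s := Finset.range n) fun i _ => hx.pow i

theorem Nat.gcd_sub_one_div_sub_one {x : ℕ} (hx : 2 ≤ x) (n : ℕ) :
    Nat.gcd (x - 1) ((x ^ n - 1) / (x - 1)) = Nat.gcd (x - 1) n := by
  rw [← Nat.geomSum_eq hx, Nat.gcd_comm, Nat.gcd_comm _ n]
  exact (Nat.geomSum_modEq (Nat.modEq_sub (one_le_two.trans hx)) n).gcd_eq

theorem stmt_0_general (p q : ℕ) (hp : p.Prime) :
    Nat.gcd (2 ^ p - 1) ((2 ^ (p * q) - 1) / (2 ^ p - 1)) = Nat.gcd (2 ^ p - 1) q := by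
  rw [pow_mul]
  exact Nat.gcd_sub_one_div_sub_one (Nat.le_self_pow hp.ne_zero 2) q

theorem stmt_0 (p q : ℕ) (hp : p.Prime) (hq : q.Prime) (hop : Odd p) (hoq : Odd q)
    (hne : p ≠ q) :
    Nat.gcd (2 ^ p - 1) ((2 ^ (p * q) - 1) / (2 ^ p - 1)) = Nat.gcd (2 ^ p - 1) q :=
  stmt_0_general p q hp
end

section
/- Let p < q be odd primes and N = pq. Then gcd(2^q - 1, (2^N - 1)/(2^q - 1)) = 1. -/
/-!
Writing `x = 2 ^ q`, the quotient `(x ^ p - 1) / (x - 1) = 1 + x + ⋯ + x ^ (p - 1)` is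
congruent to `p` modulo `x - 1`, so the gcd in question equals `gcd (2 ^ q - 1) p`. If the prime
`p` divided `2 ^ q - 1`, it would also divide `2 ^ (p - 1) - 1` by Fermat, hence
`2 ^ gcd(q, p - 1) - 1 = 1`, since `q` is a prime exceeding `p - 1`.
-/

open Finset

theorem Nat.geomSum_modEq_card {x : ℕ} (hx : 1 ≤ x) (n : ℕ) :
    ∑ i ∈ range n, x ^ i ≡ n [MOD x - 1] := by
  have h : ∀ i ∈ range n, x ^ i ≡ 1 [MOD x - 1] := fun i _ => by
    simpa using (Nat.modEq_sub hx).pow i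
  simpa using Nat.ModEq.sum h

theorem Nat.gcd_sub_one_pow_sub_one_div {x : ℕ} (hx : 2 ≤ x) (n : ℕ) :
    gcd (x - 1) ((x ^ n - 1) / (x - 1)) = gcd (x - 1) n := by
  rw [← Nat.geomSum_eq hx, gcd_comm, (Nat.geomSum_modEq_card (by omega) n).gcd_eq, gcd_comm]

theorem Nat.Prime.not_dvd_two_pow_sub_one {p q : ℕ} (hp : p.Prime) (hq : q.Prime)
    (hpq : p < q) : ¬ p ∣ 2 ^ q - 1 := by
  intro hdvd
  have hcop : Coprime 2 p :=
    (Nat.coprime_two_left.mpr (mersenne_odd.mpr hq.ne_zero)).coprime_dvd_right hdvd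
  have hfermat : p ∣ 2 ^ (p - 1) - 1 := by
    have := Nat.ModEq.pow_totient hcop
    rw [Nat.totient_prime hp] at this
    exact (Nat.modEq_iff_dvd' Nat.one_le_two_pow).mp this.symm
  have hgcd : gcd q (p - 1) = 1 :=
    Nat.coprime_of_lt_prime (by have := hp.two_le; omega) (by omega) hq
  have hdvd_one := Nat.dvd_gcd hdvd hfermat
  rw [Nat.pow_sub_one_gcd_pow_sub_one, hgcd] at hdvd_one
  exact hp.one_lt.ne' (Nat.dvd_one.mp hdvd_one)

theorem stmt_3_general (p q : ℕ) (hp : p.Prime) (hq : q.Prime)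
    (hlt : p < q) :
    Nat.gcd (2 ^ q - 1) ((2 ^ (p * q) - 1) / (2 ^ q - 1)) = 1 := by
  rw [mul_comm, pow_mul, Nat.gcd_sub_one_pow_sub_one_div (Nat.le_self_pow hq.ne_zero 2)]
  exact (hp.coprime_iff_not_dvd.mpr (hp.not_dvd_two_pow_sub_one hq hlt)).symm

theorem stmt_3 (p q : ℕ) (hp : p.Prime) (hq : q.Prime) (hop : Odd p) (hoq : Odd q)
    (hlt : p < q) :
    Nat.gcd (2 ^ q - 1) ((2 ^ (p * q) - 1) / (2 ^ q - 1)) = 1 :=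
  stmt_3_general p q hp hq hlt
end

section
/- Let p, q be distinct odd primes with gcd(p-1, q-1) = d, and let g be a common primitive root of p and q. Let D_i = {g^t x^i mod pq : 0 ≤ t < (p-1)(q-1)/d} where x ≡ g mod p and x ≡ 1 mod q. Then the D_i for i = 0, 1, ..., d-1 are pairwise disjoint and their union is the unit group (Z/pqZ)*. -/
/-!
By the Chinese remainder theorem, `g ^ t * x ^ i = g ^ s * x ^ j` in `ZMod (p * q)` exactly
when `t + i ≡ s + j [MOD p - 1]` and `t ≡ s [MOD q - 1]`. Reducing both congruences modulo
`d = gcd (p - 1) (q - 1)` gives `i ≡ j [MOD d]`, so the sets `D i` are disjoint; for fixed `i`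
they give `t ≡ s` modulo `lcm (p - 1) (q - 1) = L`, so `t ↦ g ^ t * x ^ i` is injective on
`[0, L)`. Hence the union of the `D i` consists of `d * L = (p - 1) * (q - 1) = φ (p * q)` units,
i.e. of all of them.
-/

open Finset

section ExponentPairs

variable {α : Type*} {m n : ℕ} {f : ℕ → ℕ → α}

theorem disjoint_image_range_of_lt_gcd [DecidableEq α]
    (hf : ∀ t i s j, f t i = f s j ↔ t + i ≡ s + j [MOD m] ∧ t ≡ s [MOD n]) (L : ℕ)
    {i j : ℕ} (hi : i < m.gcd n) (hj : j < m.gcd n) (hij : i ≠ j) :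
    Disjoint ((range L).image (f · i)) ((range L).image (f · j)) := by
  simp only [disjoint_left, mem_image, not_exists, not_and]
  rintro _ ⟨t, -, rfl⟩ s - hst
  obtain ⟨hm, hn⟩ := (hf s j t i).1 hst
  have : s + j ≡ s + i [MOD m.gcd n] :=
    (hm.of_dvd (Nat.gcd_dvd_left m n)).trans ((hn.of_dvd (Nat.gcd_dvd_right m n)).add_right i).symm
  exact hij ((Nat.ModEq.add_left_cancel' s this).eq_of_lt_of_lt hj hi).symm

theorem injOn_range_lcm
    (hf : ∀ t i s j, f t i = f s j ↔ t + i ≡ s + j [MOD m] ∧ t ≡ s [MOD n]) (i : ℕ) :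
    Set.InjOn (f · i) (range (m.lcm n)) := by
  intro t ht s hs hts
  obtain ⟨hm, hn⟩ := (hf t i s i).1 hts
  exact (Nat.mod_lcm (Nat.ModEq.add_right_cancel' i hm) hn).eq_of_lt_of_lt
    (mem_range.1 ht) (mem_range.1 hs)

theorem card_biUnion_image_range_lcm [DecidableEq α]
    (hf : ∀ t i s j, f t i = f s j ↔ t + i ≡ s + j [MOD m] ∧ t ≡ s [MOD n]) :
    #((range (m.gcd n)).biUnion fun i => (range (m.lcm n)).image (f · i)) = m * n := by
  have hdisj :
      (range (m.gcd n) : Set ℕ).PairwiseDisjoint fun i => (range (m.lcm n)).image (f · i) :=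
    fun i hi j hj hij => disjoint_image_range_of_lt_gcd hf _ (mem_range.1 hi) (mem_range.1 hj) hij
  rw [card_biUnion hdisj, sum_congr rfl fun i _ => card_image_of_injOn (injOn_range_lcm hf i),
    sum_const, card_range, card_range, smul_eq_mul, Nat.gcd_mul_lcm]

end ExponentPairs

namespace ZMod

theorem natCast_eq_natCast_iff_of_coprime {m n : ℕ} (h : m.Coprime n) {a b : ℕ} :
    (a : ZMod (m * n)) = b ↔ (a : ZMod m) = b ∧ (a : ZMod n) = b := by
  simp only [natCast_eq_natCast_iff, Nat.modEq_and_modEq_iff_modEq_mul h]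

theorem isUnit_natCast_mul_iff {a m n : ℕ} :
    IsUnit (a : ZMod (m * n)) ↔ IsUnit (a : ZMod m) ∧ IsUnit (a : ZMod n) := by
  simp only [isUnit_iff_coprime, Nat.coprime_mul_iff_right]

theorem ncard_setOf_isUnit (n : ℕ) [NeZero n] : {a : ZMod n | IsUnit a}.ncard = n.totient := by
  rw [← card_units_eq_totient, ← Nat.card_eq_fintype_card,
    ← Set.ncard_range_of_injective Units.val_injective]
  rfl

end ZMod

section CRT

variable {p q g x : ℕ}

theorem pow_mul_pow_eq_pow_mul_pow_iff_modEq (hpq : p.Coprime q)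
    (hgp : IsOfFinOrder (g : ZMod p)) (hgq : IsOfFinOrder (g : ZMod q))
    (hxp : (x : ZMod p) = g) (hxq : (x : ZMod q) = 1) (t i s j : ℕ) :
    (g : ZMod (p * q)) ^ t * (x : ZMod (p * q)) ^ i =
        (g : ZMod (p * q)) ^ s * (x : ZMod (p * q)) ^ j ↔
      t + i ≡ s + j [MOD orderOf (g : ZMod p)] ∧ t ≡ s [MOD orderOf (g : ZMod q)] := by
  simp only [← Nat.cast_pow, ← Nat.cast_mul, ZMod.natCast_eq_natCast_iff_of_coprime hpq]
  push_cast
  rw [hxp, hxq, ← pow_add, ← pow_add, one_pow, one_pow, mul_one, mul_one,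
    hgp.pow_eq_pow_iff_modEq, hgq.pow_eq_pow_iff_modEq]

theorem isUnit_pow_mul_pow (hgp : IsUnit (g : ZMod p)) (hgq : IsUnit (g : ZMod q))
    (hxp : (x : ZMod p) = g) (hxq : (x : ZMod q) = 1) (t i : ℕ) :
    IsUnit ((g : ZMod (p * q)) ^ t * (x : ZMod (p * q)) ^ i) := by
  have hg : IsUnit (g : ZMod (p * q)) := ZMod.isUnit_natCast_mul_iff.2 ⟨hgp, hgq⟩
  have hx : IsUnit (x : ZMod (p * q)) :=
    ZMod.isUnit_natCast_mul_iff.2 ⟨hxp ▸ hgp, hxq ▸ isUnit_one⟩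
  exact (hg.pow t).mul (hx.pow i)

end CRT

theorem stmt_9_general
    (p q : ℕ) (hp : p.Prime) (hq : q.Prime)
    (hne : p ≠ q) (d : ℕ) (hd : d = Nat.gcd (p - 1) (q - 1))
    (g : ℕ) (hgp : orderOf (g : ZMod p) = p - 1) (hgq : orderOf (g : ZMod q) = q - 1)
    (x : ℕ) (hxp : (x : ZMod p) = (g : ZMod p)) (hxq : (x : ZMod q) = 1)
    (L : ℕ) (hL : L = (p - 1) * (q - 1) / d)
    (D : ℕ → Finset (ZMod (p * q)))
    (hD : D = fun i => (Finset.range L).image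
      (fun t => (g : ZMod (p * q)) ^ t * (x : ZMod (p * q)) ^ i)) :
    (∀ i < d, ∀ j < d, i ≠ j → Disjoint (D i) (D j)) ∧
      (↑((Finset.range d).biUnion D) : Set (ZMod (p * q))) = {a : ZMod (p * q) | IsUnit a} := by
  have hpq : p.Coprime q := (Nat.coprime_primes hp hq).2 hne
  have : NeZero (p * q) := ⟨Nat.mul_ne_zero hp.ne_zero hq.ne_zero⟩
  have hgp' : IsOfFinOrder (g : ZMod p) := orderOf_pos_iff.1 (hgp ▸ Nat.sub_pos_of_lt hp.one_lt)
  have hgq' : IsOfFinOrder (g : ZMod q) := orderOf_pos_iff.1 (hgq ▸ Nat.sub_pos_of_lt hq.one_lt)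
  have hf := pow_mul_pow_eq_pow_mul_pow_iff_modEq hpq hgp' hgq' hxp hxq
  rw [hgp, hgq] at hf
  obtain rfl : L = (p - 1).lcm (q - 1) := by rw [hL, hd]; rfl
  subst hd hD
  refine ⟨fun i hi j hj hij => disjoint_image_range_of_lt_gcd hf _ hi hj hij, ?_⟩
  refine Set.eq_of_subset_of_ncard_le ?_ ?_
  · simp only [coe_biUnion, coe_image, Set.iUnion_subset_iff, Set.image_subset_iff]
    exact fun i _ t _ => isUnit_pow_mul_pow hgp'.isUnit hgq'.isUnit hxp hxq t i
  · rw [Set.ncard_coe_finset, card_biUnion_image_range_lcm hf, ZMod.ncard_setOf_isUnit,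
      Nat.totient_mul hpq, Nat.totient_prime hp, Nat.totient_prime hq]

theorem stmt_9
    (p q : ℕ) (hp : p.Prime) (hq : q.Prime) (hop : Odd p) (hoq : Odd q)
    (hne : p ≠ q) (d : ℕ) (hd : d = Nat.gcd (p - 1) (q - 1))
    (g : ℕ) (hgp : orderOf (g : ZMod p) = p - 1) (hgq : orderOf (g : ZMod q) = q - 1)
    (x : ℕ) (hxp : (x : ZMod p) = (g : ZMod p)) (hxq : (x : ZMod q) = 1)
    (L : ℕ) (hL : L = (p - 1) * (q - 1) / d)
    (D : ℕ → Finset (ZMod (p * q)))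
    (hD : D = fun i => (Finset.range L).image
      (fun t => (g : ZMod (p * q)) ^ t * (x : ZMod (p * q)) ^ i)) :
    (∀ i < d, ∀ j < d, i ≠ j → Disjoint (D i) (D j)) ∧
      (↑((Finset.range d).biUnion D) : Set (ZMod (p * q))) = {a : ZMod (p * q) | IsUnit a} :=
  stmt_9_general p q hp hq hne d hd g hgp hgq x hxp hxq L hL D hD
end

section
/- Let p = df+1, q = df'+1 be distinct odd primes with d = gcd(p-1,q-1), and let Ω_0, Ω_1 be the Gauss periods over D_0* and D_1*. If ff' is odd, or if ff' is even and d ≡ 0 (mod 4), then Ω_0·Ω_1 = (1 - pq)/4, so {Ω_0, Ω_1} = {(1+√(pq))/2, (1-√(pq))/2}. -/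
/-!
Under the Chinese remainder theorem `ZMod (p * q) ≃ ZMod p × ZMod q` the element `g ^ t * x ^ m`
becomes `(g ^ (t + m), g ^ t)`, so the Jacobi symbol `(· / pq)` equals `(-1) ^ m` on the class
`D_m`. Solving `t + m ≡ α [MOD p - 1]`, `t ≡ β [MOD q - 1]` (possible once `m ≡ α - β [MOD d]`)
shows that `D_0*` and `D_1*` are exactly the units with Jacobi symbol `1` and `-1`. Hence
`Ω₀ + Ω₁` is the sum of `ψ a = ω ^ a` over the units, which factors through the CRT as
`(-1) · (-1) = 1`, and `Ω₀ - Ω₁` is the Gauss sum of the Jacobi symbol, which factors as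
`G_p G_q` with `(G_p G_q) ^ 2 = (-1 / p) (-1 / q) p q = p q`, since both cases of the
hypothesis give `p q ≡ 1 [MOD 4]`. So `Ω₀, Ω₁` are the roots of `X ^ 2 - X + (1 - p q) / 4`.
-/

open Finset

namespace AddChar

variable {A R S C : Type*} [CommRing A] [CommRing R] [CommRing S] [CommRing C]

def restrictFst (ψ : AddChar A C) (e : A ≃+* R × S) : AddChar R C :=
  ψ.compAddMonoidHom ((e.symm : R × S →+* A).toAddMonoidHom.comp (AddMonoidHom.inl R S))

def restrictSnd (ψ : AddChar A C) (e : A ≃+* R × S) : AddChar S C :=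
  ψ.compAddMonoidHom ((e.symm : R × S →+* A).toAddMonoidHom.comp (AddMonoidHom.inr R S))

theorem restrictFst_mul_restrictSnd (ψ : AddChar A C) (e : A ≃+* R × S) (a : A) :
    ψ.restrictFst e (e a).1 * ψ.restrictSnd e (e a).2 = ψ a := by
  change ψ (e.symm ((e a).1, 0)) * ψ (e.symm (0, (e a).2)) = ψ a
  rw [← map_add_eq_mul, ← map_add]
  simp

theorem IsPrimitive.restrictFst_ne_one [Nontrivial R] {ψ : AddChar A C} (hψ : ψ.IsPrimitive)
    (e : A ≃+* R × S) : ψ.restrictFst e ≠ 1 := by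
  intro h
  refine hψ (a := e.symm (1, 0)) (by simp) (DFunLike.ext _ _ fun b => ?_)
  have : e.symm (1, 0) * b = e.symm ((e b).1, 0) := by
    apply e.injective; simp [Prod.ext_iff]
  rw [mulShift_apply, this, one_apply]
  exact DFunLike.congr_fun h (e b).1

theorem IsPrimitive.restrictSnd_ne_one [Nontrivial S] {ψ : AddChar A C} (hψ : ψ.IsPrimitive)
    (e : A ≃+* R × S) : ψ.restrictSnd e ≠ 1 := by
  intro h
  refine hψ (a := e.symm (0, 1)) (by simp) (DFunLike.ext _ _ fun b => ?_)
  have : e.symm (0, 1) * b = e.symm (0, (e b).2) := by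
    apply e.injective; simp [Prod.ext_iff]
  rw [mulShift_apply, this, one_apply]
  exact DFunLike.congr_fun h (e b).2

end AddChar

theorem sum_mulChar_mul_addChar_eq_gaussSum_mul_gaussSum {A R S C : Type*} [CommRing A]
    [CommRing R] [CommRing S] [CommRing C] [Fintype A] [Fintype R] [Fintype S]
    (e : A ≃+* R × S) (χ₁ : MulChar R C) (χ₂ : MulChar S C) (ψ : AddChar A C) :
    ∑ a, χ₁ (e a).1 * χ₂ (e a).2 * ψ a =
      gaussSum χ₁ (ψ.restrictFst e) * gaussSum χ₂ (ψ.restrictSnd e) := by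
  simp_rw [← ψ.restrictFst_mul_restrictSnd e]
  rw [gaussSum, gaussSum, sum_mul_sum, ← Fintype.sum_prod_type',
    ← e.toEquiv.sum_comp]
  refine Fintype.sum_congr _ _ fun a => ?_
  simp only [RingEquiv.toEquiv_eq_coe, EquivLike.coe_coe]
  ring

theorem gaussSum_quadraticChar_sq {F : Type*} [Field F] [Fintype F] [DecidableEq F]
    (hF : ringChar F ≠ 2) {ψ : AddChar F ℂ} (hψ : ψ ≠ 1) :
    gaussSum ((quadraticChar F).ringHomComp (Int.castRingHom ℂ)) ψ ^ 2 =
      quadraticChar F (-1) * Fintype.card F := by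
  rw [gaussSum_sq ((MulChar.ringHomComp_ne_one_iff (RingHom.injective_int _)).mpr
    (quadraticChar_ne_one hF)) ((quadraticChar_isQuadratic F).comp _)
    (AddChar.IsPrimitive.of_ne_one hψ)]
  simp

theorem quadraticChar_eq_neg_one_of_isPrimitiveRoot {F : Type*} [Field F] [Fintype F]
    [DecidableEq F] (hF : ringChar F ≠ 2) {ζ : F}
    (hζ : IsPrimitiveRoot ζ (Fintype.card F - 1)) :
    quadraticChar F ζ = -1 := by
  have hodd := FiniteField.odd_card_of_char_ne_two hF
  have hcard := Fintype.one_lt_card (α := F)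
  rw [quadraticChar_eq_pow_of_char_ne_two hF (hζ.ne_zero (by omega)),
    if_neg (hζ.pow_ne_one_of_pos_of_lt (by omega) (by omega))]

theorem IsPrimitiveRoot.exists_pow_eq_of_ne_zero {F : Type*} [Field F] [Fintype F] {ζ w : F}
    (hζ : IsPrimitiveRoot ζ (Fintype.card F - 1)) (hw : w ≠ 0) : ∃ i, ζ ^ i = w := by
  have : NeZero (Fintype.card F - 1) := ⟨by have := Fintype.one_lt_card (α := F); omega⟩
  obtain ⟨i, -, hi⟩ := hζ.eq_pow_of_pow_eq_one (FiniteField.pow_card_sub_one_eq_one w hw)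
  exact ⟨i, hi⟩

theorem quadraticChar_neg_one_mul_quadraticChar_neg_one {F K : Type*} [Field F] [Fintype F]
    [DecidableEq F] [Field K] [Fintype K] [DecidableEq K] (hF : ringChar F ≠ 2)
    (hK : ringChar K ≠ 2) (h : Fintype.card F * Fintype.card K % 4 = 1) :
    quadraticChar F (-1) * quadraticChar K (-1) = 1 := by
  rw [quadraticChar_neg_one hF, quadraticChar_neg_one hK, ← map_mul, ← Nat.cast_mul,
    ZMod.χ₄_nat_one_mod_four h]

theorem ZMod.ringChar_ne_two_of_odd {n : ℕ} (hn : Odd n) : ringChar (ZMod n) ≠ 2 := by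
  rw [ZMod.ringChar_zmod_n]
  rintro rfl
  exact absurd hn (by decide)

theorem Nat.exists_lt_gcd_lt_lcm_add_modEq {m n : ℕ} (hm : 0 < m) (hn : 0 < n) (α β : ℕ) :
    ∃ k < m.gcd n, ∃ t < m.lcm n, t + k ≡ α [MOD m] ∧ t ≡ β [MOD n] := by
  have hg : 0 < m.gcd n := Nat.gcd_pos_of_pos_left n hm
  -- trade `α` for `A ≡ α [MOD m]`, large enough that no subtraction below truncates
  set A := α + m * (β + m.gcd n)
  have hAα : A ≡ α [MOD m] := Nat.add_mul_mod_self_left α m _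
  have hβA : β + m.gcd n ≤ A := (Nat.le_mul_of_pos_left _ hm).trans (Nat.le_add_left _ _)
  set k := (A - β) % m.gcd n
  have hk : k < m.gcd n := Nat.mod_lt _ hg
  have hcompat : A - k ≡ β [MOD m.gcd n] := by
    refine ((Nat.modEq_iff_dvd' (by omega)).mpr ?_).symm
    rw [show A - k - β = (A - β) - (A - β) % m.gcd n by omega]
    exact Nat.dvd_sub_mod _
  obtain ⟨t, htm, htn⟩ := Nat.chineseRemainder' hcompat
  refine ⟨k, hk, t % m.lcm n, Nat.mod_lt _ (Nat.lcm_pos hm hn), ?_, ?_⟩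
  · have := (((Nat.mod_modEq t _).of_dvd (Nat.dvd_lcm_left m n)).trans htm).add_right k
    rw [Nat.sub_add_cancel (by omega)] at this
    exact this.trans hAα
  · exact ((Nat.mod_modEq t _).of_dvd (Nat.dvd_lcm_right m n)).trans htn

theorem Nat.two_dvd_gcd_sub_one {p q : ℕ} (hp : Odd p) (hq : Odd q) :
    2 ∣ (p - 1).gcd (q - 1) :=
  Nat.dvd_gcd (Nat.Odd.sub_odd hp odd_one).two_dvd (Nat.Odd.sub_odd hq odd_one).two_dvd

theorem mul_mod_four_eq_one {d f f' : ℕ} (hd : 2 ∣ d) (h : Odd (f * f') ∨ d % 4 = 0) :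
    (d * f + 1) * (d * f' + 1) % 4 = 1 := by
  obtain ⟨a, ha⟩ : 4 ∣ d * d := mul_dvd_mul hd hd
  obtain ⟨b, hb⟩ : 4 ∣ d * (f + f') := by
    rcases h with h | h
    · obtain ⟨hf, hf'⟩ := Nat.odd_mul.mp h
      exact mul_dvd_mul hd (hf.add_odd hf').two_dvd
    · exact (Nat.dvd_of_mod_eq_zero h).mul_right _
  have : (d * f + 1) * (d * f' + 1) = 4 * (a * (f * f') + b) + 1 := by
    linear_combination (f * f') * ha + hb
  omega

theorem Finset.sum_filter_eq_one_add_sum_filter_eq_neg_one {ι R : Type*} [Fintype ι]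
    [Ring R] [DecidableEq R] (hR : (-1 : R) ≠ 1) {w : ι → R}
    (hw : ∀ i, w i = 0 ∨ w i = 1 ∨ w i = -1)
    (F : ι → R) : ∑ i with w i = 1, F i + ∑ i with w i = -1, F i = ∑ i, w i ^ 2 * F i := by
  rw [sum_filter, sum_filter, ← sum_add_distrib]
  have : Nontrivial R := ⟨⟨-1, 1, hR⟩⟩
  refine sum_congr rfl fun i _ => ?_
  rcases hw i with h | h | h <;> simp [h, hR, hR.symm]

theorem Finset.sum_filter_eq_one_sub_sum_filter_eq_neg_one {ι R : Type*} [Fintype ι]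
    [Ring R] [DecidableEq R] (hR : (-1 : R) ≠ 1) {w : ι → R}
    (hw : ∀ i, w i = 0 ∨ w i = 1 ∨ w i = -1)
    (F : ι → R) : ∑ i with w i = 1, F i - ∑ i with w i = -1, F i = ∑ i, w i * F i := by
  rw [sum_filter, sum_filter, ← sum_sub_distrib]
  have : Nontrivial R := ⟨⟨-1, 1, hR⟩⟩
  refine sum_congr rfl fun i _ => ?_
  rcases hw i with h | h | h <;> simp [h, hR, hR.symm]

theorem mul_eq_and_pair_eq_of_add_eq_one_of_sub_sq {a b : ℂ} {s : ℝ} (hs : 0 ≤ s)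
    (hadd : a + b = 1) (hsub : (a - b) ^ 2 = s) :
    a * b = (1 - s) / 4 ∧
      ({a, b} : Set ℂ) = {(((1 + √s) / 2 : ℝ) : ℂ), (((1 - √s) / 2 : ℝ) : ℂ)} := by
  refine ⟨by linear_combination (hadd * (a + b + 1) - hsub) / 4, ?_⟩
  have hroot : ((√s : ℝ) : ℂ) ^ 2 = s := by rw [← Complex.ofReal_pow, Real.sq_sqrt hs]
  have hsign : (a - b - √s) * (a - b + √s) = 0 := by linear_combination hsub - hroot
  push_cast
  rcases mul_eq_zero.mp hsign with h | h
  · rw [show a = (1 + √s) / 2 by linear_combination (hadd + h) / 2,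
      show b = (1 - √s) / 2 by linear_combination (hadd - h) / 2]
  · rw [show a = (1 - √s) / 2 by linear_combination (hadd + h) / 2,
      show b = (1 + √s) / 2 by linear_combination (hadd - h) / 2, Set.pair_comm]

def whitemanClass (p q g x i : ℕ) : Finset (ZMod (p * q)) :=
  (range ((p - 1).lcm (q - 1))).image fun t => (g : ZMod (p * q)) ^ t * (x : ZMod (p * q)) ^ i

def whitemanClassUnion (p q g x j : ℕ) : Finset (ZMod (p * q)) :=
  (range ((p - 1).gcd (q - 1) / 2)).biUnion fun i => whitemanClass p q g x (2 * i + j)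

section Jacobi

variable {p q : ℕ} (hpq : p.Coprime q) {g x : ℕ}

theorem chineseRemainder_pow_mul_pow (hxp : (x : ZMod p) = g) (hxq : (x : ZMod q) = 1)
    (t m : ℕ) :
    ZMod.chineseRemainder hpq ((g : ZMod (p * q)) ^ t * (x : ZMod (p * q)) ^ m) =
      ((g : ZMod p) ^ (t + m), (g : ZMod q) ^ t) := by
  simp [Prod.ext_iff, hxp, hxq, pow_add]

variable [Fact p.Prime] [Fact q.Prime]

def jacobiChar (a : ZMod (p * q)) : ℂ :=
  (quadraticChar (ZMod p)).ringHomComp (Int.castRingHom ℂ) (ZMod.chineseRemainder hpq a).1 *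
    (quadraticChar (ZMod q)).ringHomComp (Int.castRingHom ℂ) (ZMod.chineseRemainder hpq a).2

theorem jacobiChar_trichotomy (a : ZMod (p * q)) :
    jacobiChar hpq a = 0 ∨ jacobiChar hpq a = 1 ∨ jacobiChar hpq a = -1 := by
  rw [jacobiChar]
  rcases (quadraticChar_isQuadratic (ZMod p)).comp (Int.castRingHom ℂ)
    (ZMod.chineseRemainder hpq a).1 with h | h | h <;>
  rcases (quadraticChar_isQuadratic (ZMod q)).comp (Int.castRingHom ℂ)
    (ZMod.chineseRemainder hpq a).2 with h' | h' | h' <;> simp [h, h']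

theorem jacobiChar_sq (a : ZMod (p * q)) :
    jacobiChar hpq a ^ 2 = (1 : MulChar (ZMod p) ℂ) (ZMod.chineseRemainder hpq a).1 *
      (1 : MulChar (ZMod q) ℂ) (ZMod.chineseRemainder hpq a).2 := by
  rw [jacobiChar, mul_pow, ← MulChar.pow_apply' _ two_ne_zero,
    ← MulChar.pow_apply' _ two_ne_zero,
    ((quadraticChar_isQuadratic _).comp _).sq_eq_one,
    ((quadraticChar_isQuadratic _).comp _).sq_eq_one]

theorem isUnit_of_jacobiChar_ne_zero {a : ZMod (p * q)} (ha : jacobiChar hpq a ≠ 0) :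
    IsUnit a := by
  rw [← isUnit_map_iff (ZMod.chineseRemainder hpq), Prod.isUnit_iff]
  constructor <;> by_contra h <;> simp [jacobiChar, MulChar.map_nonunit _ h] at ha

theorem sum_jacobiChar_eq_one_add_sum_jacobiChar_eq_neg_one {ψ : AddChar (ZMod (p * q)) ℂ}
    (hψ : ψ.IsPrimitive) :
    ∑ a with jacobiChar hpq a = 1, ψ a + ∑ a with jacobiChar hpq a = -1, ψ a = 1 := by
  rw [sum_filter_eq_one_add_sum_filter_eq_neg_one (by norm_num) (jacobiChar_trichotomy hpq)]
  simp_rw [jacobiChar_sq]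
  rw [sum_mulChar_mul_addChar_eq_gaussSum_mul_gaussSum,
    gaussSum_one_left (hψ.restrictFst_ne_one _), gaussSum_one_left (hψ.restrictSnd_ne_one _)]
  norm_num

theorem sq_sum_jacobiChar_eq_one_sub_sum_jacobiChar_eq_neg_one (hp : Odd p) (hq : Odd q)
    (h4 : p * q % 4 = 1) {ψ : AddChar (ZMod (p * q)) ℂ} (hψ : ψ.IsPrimitive) :
    (∑ a with jacobiChar hpq a = 1, ψ a - ∑ a with jacobiChar hpq a = -1, ψ a) ^ 2 =
      (p * q : ℕ) := by
  rw [sum_filter_eq_one_sub_sum_filter_eq_neg_one (by norm_num) (jacobiChar_trichotomy hpq)]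
  simp only [jacobiChar]
  rw [sum_mulChar_mul_addChar_eq_gaussSum_mul_gaussSum, mul_pow,
    gaussSum_quadraticChar_sq (ZMod.ringChar_ne_two_of_odd hp) (hψ.restrictFst_ne_one _),
    gaussSum_quadraticChar_sq (ZMod.ringChar_ne_two_of_odd hq) (hψ.restrictSnd_ne_one _),
    mul_mul_mul_comm, ← Int.cast_mul, quadraticChar_neg_one_mul_quadraticChar_neg_one
    (ZMod.ringChar_ne_two_of_odd hp) (ZMod.ringChar_ne_two_of_odd hq)
    (by rwa [ZMod.card, ZMod.card]), ZMod.card, ZMod.card]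
  push_cast
  ring

section Whiteman

variable (hgp : IsPrimitiveRoot (g : ZMod p) (p - 1))
  (hgq : IsPrimitiveRoot (g : ZMod q) (q - 1)) (hxp : (x : ZMod p) = g) (hxq : (x : ZMod q) = 1)
include hpq hgp hgq hxp hxq

theorem exists_pow_mul_pow_eq_of_isUnit {a : ZMod (p * q)} (ha : IsUnit a) :
    ∃ m < (p - 1).gcd (q - 1), ∃ t < (p - 1).lcm (q - 1),
      (g : ZMod (p * q)) ^ t * (x : ZMod (p * q)) ^ m = a := by
  rw [← isUnit_map_iff (ZMod.chineseRemainder hpq), Prod.isUnit_iff] at ha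
  obtain ⟨α, hα⟩ := IsPrimitiveRoot.exists_pow_eq_of_ne_zero (by rwa [ZMod.card]) ha.1.ne_zero
  obtain ⟨β, hβ⟩ := IsPrimitiveRoot.exists_pow_eq_of_ne_zero (by rwa [ZMod.card]) ha.2.ne_zero
  have hp2 := (Fact.out : p.Prime).two_le
  have hq2 := (Fact.out : q.Prime).two_le
  obtain ⟨m, hm, t, ht, htα, htβ⟩ :=
    Nat.exists_lt_gcd_lt_lcm_add_modEq (m := p - 1) (n := q - 1) (by omega) (by omega) α β
  refine ⟨m, hm, t, ht, (ZMod.chineseRemainder hpq).injective ?_⟩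
  rw [chineseRemainder_pow_mul_pow hpq hxp hxq, Prod.ext_iff, ← hα, ← hβ,
    (hgp.isOfFinOrder (by omega)).pow_eq_pow_iff_modEq,
    (hgq.isOfFinOrder (by omega)).pow_eq_pow_iff_modEq, ← hgp.eq_orderOf, ← hgq.eq_orderOf]
  exact ⟨htα, htβ⟩

variable (hp : Odd p) (hq : Odd q)
include hp hq

theorem jacobiChar_pow_mul_pow (t m : ℕ) :
    jacobiChar hpq ((g : ZMod (p * q)) ^ t * (x : ZMod (p * q)) ^ m) = (-1) ^ m := by
  have hηp : quadraticChar (ZMod p) g = -1 := quadraticChar_eq_neg_one_of_isPrimitiveRoot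
    (ZMod.ringChar_ne_two_of_odd hp) (by rwa [ZMod.card])
  have hηq : quadraticChar (ZMod q) g = -1 := quadraticChar_eq_neg_one_of_isPrimitiveRoot
    (ZMod.ringChar_ne_two_of_odd hq) (by rwa [ZMod.card])
  simp only [jacobiChar, chineseRemainder_pow_mul_pow hpq hxp hxq, map_pow,
    MulChar.ringHomComp_apply, hηp, hηq, map_neg, map_one]
  rw [pow_add, mul_right_comm, ← mul_pow, neg_one_mul, neg_neg, one_pow, one_mul]

theorem mem_whitemanClassUnion_iff {j : ℕ} (hj : j < 2) (a : ZMod (p * q)) :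
    a ∈ whitemanClassUnion p q g x j ↔ jacobiChar hpq a = (-1) ^ j := by
  simp only [whitemanClassUnion, whitemanClass, mem_biUnion, mem_range, mem_image]
  constructor
  · rintro ⟨i, -, t, -, rfl⟩
    rw [jacobiChar_pow_mul_pow hpq hgp hgq hxp hxq hp hq, pow_add, pow_mul, neg_one_sq,
      one_pow, one_mul]
  · intro ha
    obtain ⟨m, hm, t, ht, rfl⟩ := exists_pow_mul_pow_eq_of_isUnit hpq hgp hgq hxp hxq
      (isUnit_of_jacobiChar_ne_zero hpq (by rw [ha]; exact pow_ne_zero _ (by norm_num)))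
    rw [jacobiChar_pow_mul_pow hpq hgp hgq hxp hxq hp hq, neg_one_pow_eq_pow_mod_two] at ha
    have hmj : m % 2 = j := by
      interval_cases j <;> rcases Nat.mod_two_eq_zero_or_one m with h | h <;>
        simp only [h, pow_zero, pow_one] at ha ⊢ <;> norm_num at ha
    have hgcd := Nat.two_dvd_gcd_sub_one hp hq
    exact ⟨m / 2, by omega, t, ht, by rw [show 2 * (m / 2) + j = m by omega]⟩

end Whiteman

end Jacobi

theorem stmt_12
    (p q : ℕ) (hp : p.Prime) (hq : q.Prime) (hop : Odd p) (hoq : Odd q)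
    (hne : p ≠ q) (d : ℕ) (hd : d = Nat.gcd (p - 1) (q - 1))
    (g : ℕ) (hgp : orderOf (g : ZMod p) = p - 1) (hgq : orderOf (g : ZMod q) = q - 1)
    (x : ℕ) (hxp : (x : ZMod p) = (g : ZMod p)) (hxq : (x : ZMod q) = 1)
    (L : ℕ) (hL : L = (p - 1) * (q - 1) / d)
    (D : ℕ → Finset (ZMod (p * q)))
    (hD : D = fun i => (Finset.range L).image
      (fun t => (g : ZMod (p * q)) ^ t * (x : ZMod (p * q)) ^ i))
    (Dstar : ℕ → Finset (ZMod (p * q)))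
    (hDstar : Dstar = fun j => (Finset.range (d / 2)).biUnion (fun i => D (2 * i + j)))
    (f f' : ℕ) (hf : p - 1 = d * f) (hf' : q - 1 = d * f')
    (ω : ℂ) (hω : IsPrimitiveRoot ω (p * q))
    (Ω : ℕ → ℂ) (hΩ : Ω = fun j => ∑ a ∈ Dstar j, ω ^ (a.val))
    (hcase : Odd (f * f') ∨ (Even (f * f') ∧ d % 4 = 0)) :
    Ω 0 * Ω 1 = (1 - (p * q : ℕ)) / 4 ∧
      ({Ω 0, Ω 1} : Set ℂ) =
        {((((1 + Real.sqrt (p * q)) / 2 : ℝ)) : ℂ), ((((1 - Real.sqrt (p * q)) / 2 : ℝ)) : ℂ)} := by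
  have : Fact p.Prime := ⟨hp⟩
  have : Fact q.Prime := ⟨hq⟩
  have : NeZero (p * q) := ⟨(Nat.mul_pos hp.pos hq.pos).ne'⟩
  have hpq : p.Coprime q := (Nat.coprime_primes hp hq).mpr hne
  set ψ := AddChar.zmodChar (p * q) hω.pow_eq_one
  have hψ : ψ.IsPrimitive := AddChar.zmodChar_primitive_of_primitive_root (p * q) hω
  have hΩ' : ∀ j < 2, Ω j = ∑ a with jacobiChar hpq a = (-1) ^ j, ψ a := by
    intro j hj
    -- `Nat.lcm m n` is by definition `m * n / Nat.gcd m n`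
    have hDj : Dstar j = whitemanClassUnion p q g x j := by subst hDstar hD hL hd; rfl
    simp only [hΩ, hDj]
    refine sum_congr (ext fun a => ?_) fun a _ => (AddChar.zmodChar_apply _ a).symm
    rw [mem_whitemanClassUnion_iff hpq (hgp ▸ IsPrimitiveRoot.orderOf _)
      (hgq ▸ IsPrimitiveRoot.orderOf _) hxp hxq hop hoq hj, mem_filter,
      and_iff_right (mem_univ a)]
  have h4 : p * q % 4 = 1 := by
    rw [← Nat.sub_add_cancel hp.one_le, ← Nat.sub_add_cancel hq.one_le, hf, hf']
    exact mul_mod_four_eq_one (hd ▸ Nat.two_dvd_gcd_sub_one hop hoq) (hcase.imp_right And.right)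
  have hsum : Ω 0 + Ω 1 = 1 := by
    rw [hΩ' 0 two_pos, hΩ' 1 one_lt_two, pow_zero, pow_one]
    exact sum_jacobiChar_eq_one_add_sum_jacobiChar_eq_neg_one hpq hψ
  have hdiff : (Ω 0 - Ω 1) ^ 2 = (((p : ℝ) * q : ℝ) : ℂ) := by
    rw [hΩ' 0 two_pos, hΩ' 1 one_lt_two, pow_zero, pow_one,
      sq_sum_jacobiChar_eq_one_sub_sum_jacobiChar_eq_neg_one hpq hop hoq h4 hψ]
    norm_cast
  exact_mod_cast mul_eq_and_pair_eq_of_add_eq_one_of_sub_sq (by positivity) hsum hdiff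
end

section
/- Let {s_i} be a binary sequence of period N with S(x) = Σ_{i=0}^{N-1} s_i x^i ∈ Z[x], and let A be the circulant matrix with a_{i,j} = s_{(i-j) mod N}. If det(A) ≠ 0 (over Q), then gcd(S(2), 2^N - 1) divides gcd(det(A), 2^N - 1). -/
/-!
Modulo a common divisor `d` of `S(2)` and `2^N - 1`, the element `2` is an `N`-th root of unity,
so `j ↦ 2^(-j)` is an eigenvector of the circulant matrix `A` with eigenvalue `S(2) ≡ 0`. Its
entry at `j = 0` is `1`, so `A` is singular modulo `d`, i.e. `d ∣ det A`.
-/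

open Matrix Finset

namespace Matrix

theorem det_eq_zero_of_mulVec_eq_zero {n R : Type*} [Fintype n] [DecidableEq n] [CommRing R]
    {A : Matrix n n R} {v : n → R} (hAv : A *ᵥ v = 0) {j : n} (hj : IsUnit (v j)) :
    A.det = 0 := by
  have h : A.det • v = 0 := by
    rw [← one_mulVec v, ← smul_mulVec, ← adjugate_mul, ← mulVec_mulVec, hAv, mulVec_zero]
  exact hj.mul_left_eq_zero.mp (congr_fun h j)

theorem circulant_mulVec_addChar {n R : Type*} [Fintype n] [AddCommGroup n] [CommSemiring R]
    (c : n → R) (ψ : AddChar n R) :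
    circulant c *ᵥ (fun j => ψ (-j)) = (∑ k, c k * ψ k) • fun j => ψ (-j) := by
  ext i
  simp only [mulVec, dotProduct, circulant_apply, Pi.smul_apply, smul_eq_mul, sum_mul]
  refine Fintype.sum_equiv (Equiv.subLeft i) _ _ fun k => ?_
  rw [Equiv.subLeft_apply, mul_assoc, ← AddChar.map_add_eq_mul, show i - k + -i = -k by abel]

end Matrix

def Fin.powChar {M : Type*} [CommMonoid M] (N : ℕ) [NeZero N] {ζ : M} (hζ : ζ ^ N = 1) :
    AddChar (Fin N) M where
  toFun k := ζ ^ k.val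
  map_zero_eq_one' := by simp
  map_add_eq_mul' a b := by rw [Fin.val_add, ← pow_eq_pow_mod _ hζ, pow_add]

@[simp]
theorem Fin.powChar_apply {M : Type*} [CommMonoid M] {N : ℕ} [NeZero N] {ζ : M} (hζ : ζ ^ N = 1)
    (k : Fin N) : Fin.powChar N hζ k = ζ ^ k.val :=
  rfl

theorem dvd_det_circulant {N : ℕ} [NeZero N] (c : Fin N → ℤ) (x : ℤ) {d : ℕ}
    (hroot : (d : ℤ) ∣ x ^ N - 1) (heval : (d : ℤ) ∣ ∑ k, c k * x ^ k.val) :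
    (d : ℤ) ∣ (circulant c).det := by
  have hx : (x : ZMod d) ^ N = 1 := by
    rw [← sub_eq_zero]
    exact_mod_cast (ZMod.intCast_zmod_eq_zero_iff_dvd _ _).mpr hroot
  have hψ : ∑ k, (c k : ZMod d) * Fin.powChar N hx k = 0 := by
    simpa using (ZMod.intCast_zmod_eq_zero_iff_dvd _ _).mpr heval
  rw [← ZMod.intCast_zmod_eq_zero_iff_dvd, Int.cast_det, map_circulant]
  refine det_eq_zero_of_mulVec_eq_zero (v := fun j => Fin.powChar N hx (-j)) ?_ (j := 0)
    (by simp)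
  rw [circulant_mulVec_addChar, hψ, zero_smul]

theorem stmt_18_general (N : ℕ) (hN : 0 < N) (s : ℕ → ℕ)
    (A : Matrix (Fin N) (Fin N) ℤ)
    (hA : A = fun i j => (s ((i.val + N - j.val) % N) : ℤ)) :
    (Nat.gcd (∑ i ∈ Finset.range N, s i * 2 ^ i) (2 ^ N - 1) : ℤ) ∣
      Int.gcd A.det (2 ^ N - 1) := by
  have : NeZero N := ⟨hN.ne'⟩
  set d := Nat.gcd (∑ i ∈ Finset.range N, s i * 2 ^ i) (2 ^ N - 1)
  have hcirc : A = circulant fun k : Fin N => (s k : ℤ) := by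
    subst hA
    ext i j
    simp only [circulant_apply, Fin.val_sub]
    congr 3
    omega
  have hM : (d : ℤ) ∣ 2 ^ N - 1 := by
    have := Int.natCast_dvd_natCast.mpr (Nat.gcd_dvd_right _ _ : d ∣ 2 ^ N - 1)
    rwa [Nat.cast_sub Nat.one_le_two_pow, Nat.cast_pow, Nat.cast_ofNat, Nat.cast_one] at this
  have hS : (d : ℤ) ∣ ∑ k : Fin N, (s k : ℤ) * 2 ^ k.val := by
    rw [Fin.sum_univ_eq_sum_range (fun k => (s k : ℤ) * 2 ^ k)]
    exact_mod_cast Int.natCast_dvd_natCast.mpr (Nat.gcd_dvd_left _ _)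
  exact Int.dvd_coe_gcd (hcirc ▸ dvd_det_circulant _ 2 hM hS) hM

theorem stmt_18 (N : ℕ) (hN : 0 < N) (s : ℕ → ℕ) (hbin : ∀ i, s i = 0 ∨ s i = 1)
    (A : Matrix (Fin N) (Fin N) ℤ)
    (hA : A = fun i j => (s ((i.val + N - j.val) % N) : ℤ))
    (hdet : A.det ≠ 0) :
    (Nat.gcd (∑ i ∈ Finset.range N, s i * 2 ^ i) (2 ^ N - 1) : ℤ) ∣
      Int.gcd A.det (2 ^ N - 1) :=
  stmt_18_general N hN s A hA
end
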